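/- The polylogarithmic Lie algebra L^PL is spanned as a ℚ-vector space by the set S consisting of e1, e2, and the elements (ad e1)^n(e11), (ad e2)^n(e22), (ad e1)^n(e12) for all natural numbers n. -/

import Mathlib

inductive Gamma : Type
  | e1 | e11 | e2 | e22 | e12
deriving DecidableEq

noncomputable section

abbrev FL : Type := FreeLieAlgebra ℚ Gamma

/-- The five generators of the free Lie algebra. -/
def gen (x : Gamma) : FL := FreeLieAlgebra.of ℚ x

/-- The defining relations of the Lie algebra `L`. -/
def relSet : Set FL :=
  {⁅gen .e1, gen .e2⁆, ⁅gen .e11, gen .e2⁆, ⁅gen .e1, gen .e22⁆,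
   ⁅gen .e11, gen .e22⁆ - ⁅gen .e2 - gen .e1, gen .e12⁆,
   (-⁅gen .e11, gen .e12⁆) - ⁅gen .e2 - gen .e1, gen .e12⁆,
   ⁅gen .e22, gen .e12⁆ - ⁅gen .e2 - gen .e1, gen .e12⁆}

/-- The Lie ideal generated by the relations. -/
def relIdeal : LieIdeal ℚ FL := LieSubmodule.lieSpan ℚ FL relSet

/-- The Lie algebra `L`. -/
abbrev Lquot : Type := FL ⧸ relIdeal

/-- Projection `L(Γ) → L`. -/
def mkL : FL → Lquot := LieSubmodule.Quotient.mk (N := relIdeal)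

/-- The Lie ideal `N` of `L` generated by `e11`, `e22`, `e12`. -/
def NIdeal : LieIdeal ℚ Lquot :=
  LieSubmodule.lieSpan ℚ Lquot {mkL (gen .e11), mkL (gen .e22), mkL (gen .e12)}

/-- The Lie ideal `[N, N]`. -/
def NN : LieIdeal ℚ Lquot := ⁅NIdeal, NIdeal⁆

/-- The polylogarithmic Lie algebra `L^PL = L/[N,N]`. -/
abbrev LPL : Type := Lquot ⧸ NN

/-- Projection `L(Γ) → L^PL`. -/
def pl (x : FL) : LPL := LieSubmodule.Quotient.mk (N := NN) (mkL x)

def E1 : LPL := pl (gen .e1)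
def E11 : LPL := pl (gen .e11)
def E2 : LPL := pl (gen .e2)
def E22 : LPL := pl (gen .e22)
def E12 : LPL := pl (gen .e12)

/-- The adjoint action `ad z : w ↦ ⁅z, w⁆` as a linear endomorphism of `L^PL`. -/
def adPL (z : LPL) : Module.End ℚ LPL := LieAlgebra.ad ℚ LPL z

end

noncomputable section Aux

/-- Quotient by a Lie ideal, as a Lie algebra homomorphism. -/
def qmk {R L : Type*} [CommRing R] [LieRing L] [LieAlgebra R L] (I : LieIdeal R L) :
    L →ₗ⁅R⁆ L ⧸ I :=
  { (LieSubmodule.Quotient.mk' I).toLinearMap with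
    map_lie' := fun {_ _} => rfl }

def mkLh : FL →ₗ⁅ℚ⁆ Lquot := qmk relIdeal

def mkN : Lquot →ₗ⁅ℚ⁆ LPL := qmk NN

def fPL : FL →ₗ⁅ℚ⁆ LPL := mkN.comp mkLh

lemma mkLh_apply (x : FL) : mkLh x = mkL x := rfl

lemma mkN_mkL (x : FL) : mkN (mkL x) = pl x := rfl

lemma fPL_apply (x : FL) : fPL x = pl x := rfl

lemma mkL_eq_zero {x : FL} (h : x ∈ relSet) : mkL x = 0 := by
  have hx : x ∈ relIdeal := LieSubmodule.subset_lieSpan h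
  exact (Submodule.Quotient.mk_eq_zero _).2 hx

lemma r1 : ⁅mkL (gen .e1), mkL (gen .e2)⁆ = 0 := by
  have h : mkLh ⁅gen .e1, gen .e2⁆ = 0 := mkL_eq_zero (Or.inl rfl)
  rwa [LieHom.map_lie] at h

lemma r2 : ⁅mkL (gen .e11), mkL (gen .e2)⁆ = 0 := by
  have h : mkLh ⁅gen .e11, gen .e2⁆ = 0 := mkL_eq_zero (Or.inr (Or.inl rfl))
  rwa [LieHom.map_lie] at h

lemma r3 : ⁅mkL (gen .e1), mkL (gen .e22)⁆ = 0 := by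
  have h : mkLh ⁅gen .e1, gen .e22⁆ = 0 := mkL_eq_zero (Or.inr (Or.inr (Or.inl rfl)))
  rwa [LieHom.map_lie] at h

lemma r4 : ⁅mkL (gen .e11), mkL (gen .e22)⁆ =
    ⁅mkL (gen .e2) - mkL (gen .e1), mkL (gen .e12)⁆ := by
  have h : mkLh (⁅gen .e11, gen .e22⁆ - ⁅gen .e2 - gen .e1, gen .e12⁆) = 0 :=
    mkL_eq_zero (Or.inr (Or.inr (Or.inr (Or.inl rfl))))
  rw [map_sub, sub_eq_zero, LieHom.map_lie, LieHom.map_lie, map_sub] at h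
  exact h

/-- Adjoint endomorphism on `Lquot`. -/
def adL (z : Lquot) : Module.End ℚ Lquot := LieAlgebra.ad ℚ Lquot z

def A (n : ℕ) : Lquot := (adL (mkL (gen .e1)) ^ n) (mkL (gen .e11))
def B (n : ℕ) : Lquot := (adL (mkL (gen .e2)) ^ n) (mkL (gen .e22))
def C (n : ℕ) : Lquot := (adL (mkL (gen .e1)) ^ n) (mkL (gen .e12))

lemma A_succ (n : ℕ) : A (n + 1) = ⁅mkL (gen .e1), A n⁆ := by
  simp [A, pow_succ', adL, Module.End.mul_apply, LieAlgebra.ad_apply]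

lemma B_succ (n : ℕ) : B (n + 1) = ⁅mkL (gen .e2), B n⁆ := by
  simp [B, pow_succ', adL, Module.End.mul_apply, LieAlgebra.ad_apply]

lemma C_succ (n : ℕ) : C (n + 1) = ⁅mkL (gen .e1), C n⁆ := by
  simp [C, pow_succ', adL, Module.End.mul_apply, LieAlgebra.ad_apply]

lemma e11_mem : mkL (gen .e11) ∈ NIdeal := LieSubmodule.subset_lieSpan (Or.inl rfl)
lemma e22_mem : mkL (gen .e22) ∈ NIdeal := LieSubmodule.subset_lieSpan (Or.inr (Or.inl rfl))
lemma e12_mem : mkL (gen .e12) ∈ NIdeal := LieSubmodule.subset_lieSpan (Or.inr (Or.inr rfl))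

lemma A_mem (n : ℕ) : A n ∈ NIdeal := by
  induction n with
  | zero => simpa [A] using e11_mem
  | succ n ih => rw [A_succ]; exact NIdeal.lie_mem ih

lemma B_mem (n : ℕ) : B n ∈ NIdeal := by
  induction n with
  | zero => simpa [B] using e22_mem
  | succ n ih => rw [B_succ]; exact NIdeal.lie_mem ih

lemma C_mem (n : ℕ) : C n ∈ NIdeal := by
  induction n with
  | zero => simpa [C] using e12_mem
  | succ n ih => rw [C_succ]; exact NIdeal.lie_mem ih

lemma nn_zero {x y : Lquot} (hx : x ∈ NIdeal) (hy : y ∈ NIdeal) : ⁅mkN x, mkN y⁆ = 0 := by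
  rw [← LieHom.map_lie]
  have h : ⁅x, y⁆ ∈ NN := LieSubmodule.lie_mem_lie hx hy
  exact (Submodule.Quotient.mk_eq_zero _).2 h

def aa (n : ℕ) : LPL := (adPL E1 ^ n) E11
def bb (n : ℕ) : LPL := (adPL E2 ^ n) E22
def cc (n : ℕ) : LPL := (adPL E1 ^ n) E12

lemma aa_succ (n : ℕ) : aa (n + 1) = ⁅E1, aa n⁆ := by
  simp [aa, pow_succ', adPL, Module.End.mul_apply, LieAlgebra.ad_apply]

lemma bb_succ (n : ℕ) : bb (n + 1) = ⁅E2, bb n⁆ := by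
  simp [bb, pow_succ', adPL, Module.End.mul_apply, LieAlgebra.ad_apply]

lemma cc_succ (n : ℕ) : cc (n + 1) = ⁅E1, cc n⁆ := by
  simp [cc, pow_succ', adPL, Module.End.mul_apply, LieAlgebra.ad_apply]

lemma aa_zero : aa 0 = E11 := by simp [aa]
lemma bb_zero : bb 0 = E22 := by simp [bb]
lemma cc_zero : cc 0 = E12 := by simp [cc]

lemma mkN_A (n : ℕ) : mkN (A n) = aa n := by
  induction n with
  | zero => simp [A, aa]; rfl
  | succ n ih => rw [A_succ, aa_succ, LieHom.map_lie, ih]; rfl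

lemma mkN_B (n : ℕ) : mkN (B n) = bb n := by
  induction n with
  | zero => simp [B, bb]; rfl
  | succ n ih => rw [B_succ, bb_succ, LieHom.map_lie, ih]; rfl

lemma mkN_C (n : ℕ) : mkN (C n) = cc n := by
  induction n with
  | zero => simp [C, cc]; rfl
  | succ n ih => rw [C_succ, cc_succ, LieHom.map_lie, ih]; rfl

lemma F1 : ⁅E1, E2⁆ = 0 := by
  have : ⁅mkN (mkL (gen .e1)), mkN (mkL (gen .e2))⁆ = 0 := by
    rw [← LieHom.map_lie, r1, map_zero]
  exact this

lemma F2 : ∀ n, ⁅E1, bb n⁆ = 0 := by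
  intro n
  induction n with
  | zero =>
    rw [bb_zero]
    have : ⁅mkN (mkL (gen .e1)), mkN (mkL (gen .e22))⁆ = 0 := by
      rw [← LieHom.map_lie, r3, map_zero]
    exact this
  | succ n ih => rw [bb_succ, leibniz_lie, F1, zero_lie, ih, lie_zero, add_zero]

lemma F21 : ⁅E2, E1⁆ = 0 := by rw [← lie_skew, F1, neg_zero]

lemma F3 : ∀ n, ⁅E2, aa n⁆ = 0 := by
  intro n
  induction n with
  | zero =>
    rw [aa_zero, ← lie_skew]
    have : ⁅mkN (mkL (gen .e11)), mkN (mkL (gen .e2))⁆ = 0 := by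
      rw [← LieHom.map_lie, r2, map_zero]
    rw [show ⁅E11, E2⁆ = 0 from this, neg_zero]
  | succ n ih => rw [aa_succ, leibniz_lie, F21, zero_lie, ih, lie_zero, add_zero]

lemma F4 : ∀ n, ⁅E2 - E1, cc n⁆ = 0 := by
  intro n
  induction n with
  | zero =>
    rw [cc_zero]
    have h : ⁅mkN (mkL (gen .e2) - mkL (gen .e1)), mkN (mkL (gen .e12))⁆ = 0 := by
      rw [← LieHom.map_lie, ← r4]
      exact nn_zero e11_mem e22_mem
    rw [map_sub] at h
    exact h
  | succ n ih =>
    rw [cc_succ, leibniz_lie, ih, lie_zero, add_zero, sub_lie, F21, lie_self, sub_zero,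
      zero_lie]

lemma F4' (n : ℕ) : ⁅E2, cc n⁆ = cc (n + 1) := by
  have h := F4 n
  rw [sub_lie, sub_eq_zero] at h
  rw [h, cc_succ]

/-- The spanning set. -/
def T : Set LPL :=
  ({E1, E2} ∪ (Set.range fun n : ℕ => (adPL E1 ^ n) E11)
    ∪ (Set.range fun n : ℕ => (adPL E2 ^ n) E22)
    ∪ (Set.range fun n : ℕ => (adPL E1 ^ n) E12))

lemma hE1T : E1 ∈ T := Or.inl (Or.inl (Or.inl (Or.inl rfl)))
lemma hE2T : E2 ∈ T := Or.inl (Or.inl (Or.inl (Or.inr rfl)))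
lemma haT (n : ℕ) : aa n ∈ T := Or.inl (Or.inl (Or.inr ⟨n, rfl⟩))
lemma hbT (n : ℕ) : bb n ∈ T := Or.inl (Or.inr ⟨n, rfl⟩)
lemma hcT (n : ℕ) : cc n ∈ T := Or.inr ⟨n, rfl⟩

lemma mem_T_cases {x : LPL} (h : x ∈ T) :
    x = E1 ∨ x = E2 ∨ (∃ n, x = aa n) ∨ (∃ n, x = bb n) ∨ (∃ n, x = cc n) := by
  rcases h with ((((h | h) | ⟨n, h⟩) | ⟨n, h⟩) | ⟨n, h⟩)
  · exact Or.inl h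
  · exact Or.inr (Or.inl h)
  · exact Or.inr (Or.inr (Or.inl ⟨n, h.symm⟩))
  · exact Or.inr (Or.inr (Or.inr (Or.inl ⟨n, h.symm⟩)))
  · exact Or.inr (Or.inr (Or.inr (Or.inr ⟨n, h.symm⟩)))

lemma bracket_T {x y : LPL} (hx : x ∈ T) (hy : y ∈ T) : ⁅x, y⁆ ∈ Submodule.span ℚ T := by
  set S := Submodule.span ℚ T with hS
  have skew : ∀ u v : LPL, ⁅u, v⁆ ∈ S → ⁅v, u⁆ ∈ S := fun u v h => by
    rw [← lie_skew]; exact S.neg_mem h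
  have mT : ∀ z ∈ T, z ∈ S := fun z hz => Submodule.subset_span hz
  -- brackets with E1 on the left
  have hE1 : ∀ y ∈ T, ⁅E1, y⁆ ∈ S := by
    intro y hy
    rcases mem_T_cases hy with rfl | rfl | ⟨n, rfl⟩ | ⟨n, rfl⟩ | ⟨n, rfl⟩
    · rw [lie_self]; exact S.zero_mem
    · rw [F1]; exact S.zero_mem
    · rw [← aa_succ]; exact mT _ (haT (n + 1))
    · rw [F2]; exact S.zero_mem
    · rw [← cc_succ]; exact mT _ (hcT (n + 1))
  have hE2 : ∀ y ∈ T, ⁅E2, y⁆ ∈ S := by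
    intro y hy
    rcases mem_T_cases hy with rfl | rfl | ⟨n, rfl⟩ | ⟨n, rfl⟩ | ⟨n, rfl⟩
    · rw [F21]; exact S.zero_mem
    · rw [lie_self]; exact S.zero_mem
    · rw [F3]; exact S.zero_mem
    · rw [← bb_succ]; exact mT _ (hbT (n + 1))
    · rw [F4']; exact mT _ (hcT (n + 1))
  -- brackets among the families vanish
  have hNN : ∀ u v : Lquot, u ∈ NIdeal → v ∈ NIdeal →
      ∀ y : LPL, y = mkN v → ⁅mkN u, y⁆ ∈ S := by
    intro u v hu hv y hy
    rw [hy, nn_zero hu hv]; exact S.zero_mem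
  have famN : ∀ y ∈ T, y = E1 ∨ y = E2 ∨ ∃ v : Lquot, v ∈ NIdeal ∧ y = mkN v := by
    intro y hy
    rcases mem_T_cases hy with rfl | rfl | ⟨n, rfl⟩ | ⟨n, rfl⟩ | ⟨n, rfl⟩
    · exact Or.inl rfl
    · exact Or.inr (Or.inl rfl)
    · exact Or.inr (Or.inr ⟨A n, A_mem n, (mkN_A n).symm⟩)
    · exact Or.inr (Or.inr ⟨B n, B_mem n, (mkN_B n).symm⟩)
    · exact Or.inr (Or.inr ⟨C n, C_mem n, (mkN_C n).symm⟩)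
  rcases famN x hx with rfl | rfl | ⟨u, hu, rfl⟩
  · exact hE1 y hy
  · exact hE2 y hy
  · rcases famN y hy with rfl | rfl | ⟨v, hv, rfl⟩
    · exact skew _ _ (hE1 _ hx)
    · exact skew _ _ (hE2 _ hx)
    · exact hNN u v hu hv _ rfl

lemma bracket_span {x y : LPL} (hx : x ∈ Submodule.span ℚ T) (hy : y ∈ Submodule.span ℚ T) :
    ⁅x, y⁆ ∈ Submodule.span ℚ T := by
  induction hx, hy using Submodule.span_induction₂ with
  | mem_mem u v hu hv => exact bracket_T hu hv
  | zero_left v hv => rw [zero_lie]; exact Submodule.zero_mem _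
  | zero_right u hu => rw [lie_zero]; exact Submodule.zero_mem _
  | add_left u v w hu hv hw h1 h2 => rw [add_lie]; exact Submodule.add_mem _ h1 h2
  | add_right u v w hu hv hw h1 h2 => rw [lie_add]; exact Submodule.add_mem _ h1 h2
  | smul_left r u v hu hv h => rw [smul_lie]; exact Submodule.smul_mem _ _ h
  | smul_right r u v hu hv h => rw [lie_smul]; exact Submodule.smul_mem _ _ h

/-- The span of `T` as a Lie subalgebra. -/
def K : LieSubalgebra ℚ LPL :=
  { Submodule.span ℚ T with
    lie_mem' := fun hx hy => bracket_span hx hy }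

lemma mem_K_iff {x : LPL} : x ∈ K ↔ x ∈ Submodule.span ℚ T := Iff.rfl

lemma gen_mem_K (x : Gamma) : fPL (gen x) ∈ K := by
  cases x with
  | e1 => exact Submodule.subset_span hE1T
  | e2 => exact Submodule.subset_span hE2T
  | e11 => have := Submodule.subset_span (R := ℚ) (haT 0); rwa [aa_zero] at this
  | e22 => have := Submodule.subset_span (R := ℚ) (hbT 0); rwa [bb_zero] at this
  | e12 => have := Submodule.subset_span (R := ℚ) (hcT 0); rwa [cc_zero] at this

lemma fPL_mem_K (y : FL) : fPL y ∈ K := by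
  let g : FL →ₗ⁅ℚ⁆ K := FreeLieAlgebra.lift ℚ (fun x => (⟨fPL (gen x), gen_mem_K x⟩ : K))
  have h : K.incl.comp g = fPL := by
    apply FreeLieAlgebra.hom_ext
    intro x
    show (K.incl (g (FreeLieAlgebra.of ℚ x)) : LPL) = fPL (FreeLieAlgebra.of ℚ x)
    rw [show g (FreeLieAlgebra.of ℚ x) = ⟨fPL (gen x), gen_mem_K x⟩ from
      FreeLieAlgebra.lift_of_apply _ x]
    rfl
  have h2 : fPL y = (g y : LPL) := by rw [← h]; rfl
  rw [h2]
  exact (g y).2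

end Aux

theorem stmt4 :
    Submodule.span ℚ
      ({E1, E2} ∪ (Set.range fun n : ℕ => (adPL E1 ^ n) E11)
        ∪ (Set.range fun n : ℕ => (adPL E2 ^ n) E22)
        ∪ (Set.range fun n : ℕ => (adPL E1 ^ n) E12) : Set LPL) = ⊤ := by
  rw [eq_top_iff]
  rintro x -
  obtain ⟨w, rfl⟩ := LieSubmodule.Quotient.surjective_mk' NN x
  obtain ⟨z, rfl⟩ := LieSubmodule.Quotient.surjective_mk' relIdeal w
  exact fPL_mem_K z
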